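/- arXiv:2410.03193 — 8 statements merged into one kernel-verified Lean document; each statement's English description precedes it below -/
import Mathlib

section
/- For all n ≥ 2, the number of strings of length n over the alphabet {0,1,...,a+b-1} in which every letter ≥ a appears only immediately after a 0 satisfies the Horadam recurrence s(n) = a·s(n-1) + b·s(n-2), with s(0)=1 and s(1)=a. -/
/-- A Horadam string over the alphabet `{0,…,a+b-1}`: every letter `≥ a`
occurs only immediately after a `0`. -/
def IsHoradam (a b : ℕ) (l : List ℕ) : Prop :=
  (∀ c ∈ l, c < a + b) ∧
  ∀ i, i < l.length → a ≤ l.getD i 0 → 0 < i ∧ l.getD (i - 1) 0 = 0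

/-- The number of Horadam strings of length `n`. -/
noncomputable def horadamCount (a b n : ℕ) : ℕ :=
  Nat.card {l : List ℕ // l.length = n ∧ IsHoradam a b l}

lemma horadam_nil (a b : ℕ) : IsHoradam a b [] := ⟨by simp, by simp⟩

lemma horadam_singleton (a b c : ℕ) : IsHoradam a b [c] ↔ c < a := by
  constructor
  · rintro ⟨h1, h2⟩
    by_contra h
    exact absurd (h2 0 (by simp) (by simpa using Nat.le_of_not_lt h)).1 (by simp)
  · intro h
    refine ⟨by simpa using h.trans_le (Nat.le_add_right a b), ?_⟩
    intro i hi hge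
    simp at hi
    subst hi
    simp at hge
    omega

lemma horadam_cons_lt {a b c d : ℕ} (u : List ℕ) (hd : d < a) :
    IsHoradam a b (c :: d :: u) ↔ c < a ∧ IsHoradam a b (d :: u) := by
  constructor
  · rintro ⟨h1, h2⟩
    refine ⟨?_, ?_, ?_⟩
    · by_contra h
      exact absurd (h2 0 (by simp) (by simpa using Nat.le_of_not_lt h)).1 (by simp)
    · intro x hx; exact h1 x (by simp [hx])
    · intro i hi hge
      have := h2 (i + 1) (by simpa using hi) (by simpa using hge)
      rcases i with _ | j
      · simp at hge; omega
      · refine ⟨Nat.succ_pos _, ?_⟩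
        simpa using this.2
  · rintro ⟨hc, h1, h2⟩
    refine ⟨?_, ?_⟩
    · intro x hx
      rcases List.mem_cons.mp hx with rfl | hx
      · omega
      · exact h1 x hx
    · intro i hi hge
      rcases i with _ | j
      · simp at hge; omega
      · have := h2 j (by simpa using hi) (by simpa using hge)
        rcases j with _ | k
        · simp at hge; omega
        · refine ⟨Nat.succ_pos _, ?_⟩
          simpa using this.2

lemma horadam_cons_ge {a b c d : ℕ} (u : List ℕ) (ha : 0 < a) (hd : a ≤ d) :
    IsHoradam a b (c :: d :: u) ↔ c = 0 ∧ d < a + b ∧ IsHoradam a b u := by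
  constructor
  · rintro ⟨h1, h2⟩
    refine ⟨?_, h1 d (by simp), ?_, ?_⟩
    · simpa using (h2 1 (by simp) (by simpa using hd)).2
    · intro x hx; exact h1 x (by simp [hx])
    · intro i hi hge
      have := h2 (i + 2) (by simpa using hi) (by simpa using hge)
      rcases i with _ | j
      · exfalso
        have : d = 0 := by simpa using this.2
        omega
      · refine ⟨Nat.succ_pos _, ?_⟩
        simpa using this.2
  · rintro ⟨rfl, hdb, h1, h2⟩
    refine ⟨?_, ?_⟩
    · intro x hx
      rcases List.mem_cons.mp hx with rfl | hx
      · omega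
      rcases List.mem_cons.mp hx with rfl | hx
      · exact hdb
      · exact h1 x hx
    · intro i hi hge
      rcases i with _ | j
      · simp at hge; omega
      rcases j with _ | k
      · exact ⟨by omega, by simp⟩
      · have := h2 k (by simpa using hi) (by simpa using hge)
        rcases k with _ | m
        · omega
        · refine ⟨by omega, ?_⟩
          simpa using this.2

/-- Explicit recursive construction of the Horadam strings of length `n`. -/
def horadamFinset (a b : ℕ) : ℕ → Finset (List ℕ)
  | 0 => {[]}
  | 1 => (Finset.range a).image (fun c => [c])
  | (n + 2) =>
      ((Finset.range a) ×ˢ horadamFinset a b (n + 1)).image (fun p => p.1 :: p.2) ∪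
      ((Finset.range b) ×ˢ horadamFinset a b n).image (fun p => 0 :: (a + p.1) :: p.2)

lemma mem_horadamFinset2 (a b : ℕ) (n : ℕ) (l : List ℕ) :
    l ∈ horadamFinset a b (n+2) ↔
      (∃ c < a, ∃ t ∈ horadamFinset a b (n+1), l = c :: t) ∨
      (∃ e < b, ∃ u ∈ horadamFinset a b n, l = 0 :: (a + e) :: u) := by
  simp [horadamFinset, Finset.mem_union, Finset.mem_image, Finset.mem_product]
  constructor
  · rintro (⟨c, t, ⟨hc, ht⟩, rfl⟩ | ⟨e, u, ⟨he, hu⟩, rfl⟩)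
    · exact Or.inl ⟨c, hc, t, ht, rfl⟩
    · exact Or.inr ⟨e, he, u, hu, rfl⟩
  · rintro (⟨c, hc, t, ht, rfl⟩ | ⟨e, he, u, hu, rfl⟩)
    · exact Or.inl ⟨c, t, ⟨hc, ht⟩, rfl⟩
    · exact Or.inr ⟨e, u, ⟨he, hu⟩, rfl⟩

lemma mem_horadamFinset (a b : ℕ) (ha : 0 < a) :
    ∀ n (l : List ℕ), l ∈ horadamFinset a b n ↔ l.length = n ∧ IsHoradam a b l := by
  intro n
  induction n using Nat.strong_induction_on with
  | _ n IH =>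
    match n with
    | 0 =>
      intro l
      simp only [horadamFinset, Finset.mem_singleton]
      constructor
      · rintro rfl; exact ⟨rfl, horadam_nil a b⟩
      · rintro ⟨hl, -⟩; exact List.length_eq_zero_iff.mp hl
    | 1 =>
      intro l
      simp only [horadamFinset, Finset.mem_image, Finset.mem_range]
      constructor
      · rintro ⟨c, hc, rfl⟩
        exact ⟨rfl, (horadam_singleton a b c).mpr hc⟩
      · rintro ⟨hl, hh⟩
        match l, hl with
        | [c], _ => exact ⟨c, (horadam_singleton a b c).mp hh, rfl⟩
    | (n + 2) =>
      intro l
      rw [mem_horadamFinset2]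
      constructor
      · rintro (⟨c, hc, t, ht, rfl⟩ | ⟨e, he, u, hu, rfl⟩)
        · obtain ⟨htl, hth⟩ := (IH (n+1) (by omega) t).mp ht
          match t, htl with
          | d :: u, htl =>
            have hd : d < a := by
              by_contra h
              have := (hth.2 0 (by simp) (by simpa using Nat.le_of_not_lt h)).1
              omega
            exact ⟨by simp [htl], (horadam_cons_lt u hd).mpr ⟨hc, hth⟩⟩
        · obtain ⟨hul, huh⟩ := (IH n (by omega) u).mp hu
          refine ⟨by simp [hul], (horadam_cons_ge u ha (by omega)).mpr ⟨rfl, by omega, huh⟩⟩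
      · rintro ⟨hl, hh⟩
        match l, hl with
        | c :: d :: u, hl =>
          rcases lt_or_ge d a with hd | hd
          · obtain ⟨hc, hth⟩ := (horadam_cons_lt u hd).mp hh
            refine Or.inl ⟨c, hc, d :: u, ?_, rfl⟩
            exact (IH (n+1) (by omega) _).mpr ⟨by simpa using hl, hth⟩
          · obtain ⟨rfl, hdb, huh⟩ := (horadam_cons_ge u ha hd).mp hh
            refine Or.inr ⟨d - a, by omega, u, ?_, by rw [Nat.add_sub_cancel' hd]⟩
            exact (IH n (by omega) _).mpr ⟨by simpa using hl, huh⟩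

lemma horadamCount_eq (a b : ℕ) (ha : 0 < a) (n : ℕ) :
    horadamCount a b n = (horadamFinset a b n).card := by
  rw [horadamCount]
  rw [Nat.card_congr (Equiv.subtypeEquivRight
    (fun l => (mem_horadamFinset a b ha n l).symm))]
  exact Nat.card_eq_finsetCard _

lemma card_horadamFinset_rec (a b : ℕ) (ha : 0 < a) (n : ℕ) :
    (horadamFinset a b (n + 2)).card =
      a * (horadamFinset a b (n + 1)).card + b * (horadamFinset a b n).card := by
  have hdisj : Disjoint
      (((Finset.range a) ×ˢ horadamFinset a b (n + 1)).image (fun p => p.1 :: p.2))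
      (((Finset.range b) ×ˢ horadamFinset a b n).image (fun p => 0 :: (a + p.1) :: p.2)) := by
    rw [Finset.disjoint_left]
    rintro l hl1 hl2
    simp only [Finset.mem_image, Finset.mem_product, Finset.mem_range] at hl1 hl2
    obtain ⟨⟨c, t⟩, ⟨hc, ht⟩, rfl⟩ := hl1
    obtain ⟨⟨e, u⟩, ⟨he, hu⟩, heq⟩ := hl2
    obtain ⟨htl, hth⟩ := (mem_horadamFinset a b ha _ t).mp ht
    have : t = (a + e) :: u := by
      injection heq with h1 h2
      exact h2.symm
    subst this
    have := (hth.2 0 (by simp) (by simp)).1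
    omega
  have hinj1 : Function.Injective (fun p : ℕ × List ℕ => p.1 :: p.2) := by
    rintro ⟨c, t⟩ ⟨c', t'⟩ h
    simp_all
  have hinj2 : Function.Injective (fun p : ℕ × List ℕ => 0 :: (a + p.1) :: p.2) := by
    rintro ⟨c, t⟩ ⟨c', t'⟩ h
    simp_all
  rw [show horadamFinset a b (n + 2) =
      ((Finset.range a) ×ˢ horadamFinset a b (n + 1)).image (fun p => p.1 :: p.2) ∪
      ((Finset.range b) ×ˢ horadamFinset a b n).image (fun p => 0 :: (a + p.1) :: p.2)
    from rfl]
  rw [Finset.card_union_of_disjoint hdisj,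
      Finset.card_image_of_injective _ hinj1, Finset.card_image_of_injective _ hinj2,
      Finset.card_product, Finset.card_product, Finset.card_range, Finset.card_range]

theorem horadam_count_recurrence (a b : ℕ) (ha : 0 < a) (hb : 0 < b) :
    horadamCount a b 0 = 1 ∧ horadamCount a b 1 = a ∧
    ∀ n, 2 ≤ n →
      horadamCount a b n =
        a * horadamCount a b (n - 1) + b * horadamCount a b (n - 2) := by
  refine ⟨?_, ?_, ?_⟩
  · rw [horadamCount_eq a b ha]
    simp [horadamFinset]
  · rw [horadamCount_eq a b ha]
    rw [show horadamFinset a b 1 = (Finset.range a).image (fun c => [c]) from rfl]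
    rw [Finset.card_image_of_injective _ (fun x y h => by simpa using h), Finset.card_range]
  · intro n hn
    obtain ⟨m, rfl⟩ : ∃ m, n = m + 2 := ⟨n - 2, by omega⟩
    rw [horadamCount_eq a b ha, horadamCount_eq a b ha, horadamCount_eq a b ha]
    simpa using card_horadamFinset_rec a b ha m
end

section
/- The edge-count sequence defined by the recurrence e(n) = a·e(n-1) + b·e(n-2) + s(n) - s(n-1), with e(0)=0 and e(1)=a-1, satisfies the closed form e(n) = ∑_{k=0}^{n-1} s(k)·(s(n-k) - s(n-1-k)) for all n ≥ 0. -/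
theorem horadam_edge_count_convolution (a b : ℕ) (ha : 0 < a) (hb : 0 < b)
    (s e : ℕ → ℤ) (hs0 : s 0 = 1) (hs1 : s 1 = (a : ℤ))
    (hsrec : ∀ n, 2 ≤ n → s n = (a : ℤ) * s (n - 1) + (b : ℤ) * s (n - 2))
    (he0 : e 0 = 0) (he1 : e 1 = (a : ℤ) - 1)
    (herec : ∀ n, 2 ≤ n →
      e n = (a : ℤ) * e (n - 1) + (b : ℤ) * e (n - 2) + s n - s (n - 1)) :
    ∀ n, e n = ∑ k ∈ Finset.range n, s k * (s (n - k) - s (n - 1 - k)) := by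
  intro n
  induction n using Nat.strong_induction_on with
  | _ n ih =>
    match n with
    | 0 => simpa using he0
    | 1 => simp [he1, hs0, hs1]
    | (m+2) =>
      have hrec := herec (m+2) (by omega)
      simp only [show m+2-1 = m+1 from rfl, show m+2-2 = m from rfl] at hrec
      rw [hrec, ih (m+1) (by omega), ih m (by omega)]
      simp only [show m+2-1 = m+1 from rfl, show m+1-1 = m from rfl]
      rw [Finset.sum_range_succ, Finset.sum_range_succ, Finset.sum_range_succ]
      simp only [show m+2-m = 2 from by omega, show m+1-m = 1 from by omega,
        show m+2-(m+1) = 1 from by omega, show m+1-(m+1) = 0 from by omega,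
        Nat.sub_self]
      have key : ∀ k ∈ Finset.range m, s k * (s (m+2-k) - s (m+1-k)) =
          (a:ℤ) * (s k * (s (m+1-k) - s (m-k))) + (b:ℤ) * (s k * (s (m-k) - s (m-1-k))) := by
        intro k hk
        have hk' := Finset.mem_range.mp hk
        have h1 := hsrec (m+2-k) (by omega)
        have h2 := hsrec (m+1-k) (by omega)
        rw [show m+2-k-1 = m+1-k from by omega, show m+2-k-2 = m-k from by omega] at h1
        rw [show m+1-k-1 = m-k from by omega, show m+1-k-2 = m-1-k from by omega] at h2
        rw [h1, h2]; ring
      rw [Finset.sum_congr rfl key, Finset.sum_add_distrib, ← Finset.mul_sum, ← Finset.mul_sum]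
      have hs2 := hsrec 2 (by omega)
      norm_num at hs2
      have hsm2 := hsrec (m+2) (by omega)
      simp only [show m+2-1 = m+1 from rfl, show m+2-2 = m from rfl] at hsm2
      linear_combination hsm2 - hs2 * s m + hs1 * (s m - s (m+1)) +
        hs0 * (s (m+1) - (a:ℤ) * s m - (b:ℤ) * s m)
end

section
/- The Horadam sequence satisfies s(n) - s(n-1) = ∑_{k=0}^{n} (-1)^{n-k} · C(⌊(n+k)/2⌋, k) · a^k · b^{⌊(n-k)/2⌋} for all n ≥ 1. -/
private def horadamT (a b : ℕ) (n k : ℕ) : ℤ :=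
  (-1 : ℤ) ^ (n - k) * ((n + k) / 2).choose k * (a : ℤ) ^ k * (b : ℤ) ^ ((n - k) / 2)

private def horadamD (a b : ℕ) (n : ℕ) : ℤ :=
  ∑ k ∈ Finset.range (n + 1), horadamT a b n k

private lemma horadamT_point (a b m k : ℕ) (hk : k < m + 2) :
    horadamT a b (m+2) (k+1) = a * horadamT a b (m+1) k + b * horadamT a b m (k+1) := by
  unfold horadamT
  rcases lt_trichotomy k m with h | heq | h
  · obtain ⟨e, rfl⟩ : ∃ e, m = k + 1 + e := ⟨m - k - 1, by omega⟩
    have d1 : (k + 1 + e + 2 + (k + 1)) / 2 = k + 1 + e / 2 + 1 := by omega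
    have d2 : k + 1 + e + 2 - (k + 1) = e + 2 := by omega
    have d4 : (k + 1 + e + 1 + k) / 2 = k + 1 + e / 2 := by omega
    have d5 : k + 1 + e + 1 - k = e + 2 := by omega
    have d6 : (k + 1 + e + (k + 1)) / 2 = k + 1 + e / 2 := by omega
    have d7 : k + 1 + e - (k + 1) = e := by omega
    have d3 : (e + 2) / 2 = e / 2 + 1 := by omega
    rw [d1, d2, d4, d5, d6, d7, d3, Nat.choose_succ_succ]
    push_cast
    ring
  · subst heq
    have e1 : (k + 2 + (k+1)) / 2 = k + 1 := by omega
    have e2 : (k + 2 - (k+1)) / 2 = 0 := by omega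
    have e2s : k + 2 - (k+1) = 1 := by omega
    have e3 : (k + 1 + k) / 2 = k := by omega
    have e4 : (k + 1 - k) / 2 = 0 := by omega
    have e4s : k + 1 - k = 1 := by omega
    have e5 : (k + (k+1)) / 2 = k := by omega
    have e6 : k - (k+1) = 0 := by omega
    rw [e1, e2, e2s, e3, e4, e4s, e5, e6, Nat.choose_self, Nat.choose_self,
      Nat.choose_succ_self]
    push_cast
    ring
  · have hk1 : k = m + 1 := by omega
    subst hk1
    have e1 : (m + 2 + (m+2)) / 2 = m + 2 := by omega
    have e2 : m + 2 - (m+2) = 0 := by omega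
    have e3 : (m + 1 + (m+1)) / 2 = m + 1 := by omega
    have e4 : m + 1 - (m+1) = 0 := by omega
    have e5 : (m + (m+2)) / 2 = m + 1 := by omega
    have e6 : m - (m+2) = 0 := by omega
    rw [e1, e2, e3, e4, e5, e6, Nat.choose_self, Nat.choose_self, Nat.choose_succ_self]
    push_cast
    ring

private lemma horadamD_rec (a b m : ℕ) :
    horadamD a b (m+2) = a * horadamD a b (m+1) + b * horadamD a b m := by
  unfold horadamD
  rw [show m + 2 + 1 = m + 2 + 1 from rfl, Finset.sum_range_succ']
  have hstep : ∑ k ∈ Finset.range (m+2), horadamT a b (m+2) (k+1)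
      = ∑ k ∈ Finset.range (m+2),
          ((a : ℤ) * horadamT a b (m+1) k + b * horadamT a b m (k+1)) :=
    Finset.sum_congr rfl fun k hk => horadamT_point a b m k (Finset.mem_range.mp hk)
  rw [hstep, Finset.sum_add_distrib, ← Finset.mul_sum, ← Finset.mul_sum]
  have hb : ∑ k ∈ Finset.range (m+2), horadamT a b m (k+1)
      = (∑ k ∈ Finset.range (m+1), horadamT a b m k) - horadamT a b m 0 := by
    have h1 : ∑ k ∈ Finset.range (m+3), horadamT a b m k
        = (∑ k ∈ Finset.range (m+2), horadamT a b m (k+1)) + horadamT a b m 0 :=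
      Finset.sum_range_succ' _ _
    have h2 : ∑ k ∈ Finset.range (m+3), horadamT a b m k
        = (∑ k ∈ Finset.range (m+1), horadamT a b m k)
          + horadamT a b m (m+1) + horadamT a b m (m+2) := by
      rw [Finset.sum_range_succ, Finset.sum_range_succ]
    have hz1 : horadamT a b m (m+1) = 0 := by
      unfold horadamT
      have : (m + (m+1)) / 2 = m := by omega
      rw [this, Nat.choose_succ_self]
      push_cast; ring
    have hz2 : horadamT a b m (m+2) = 0 := by
      unfold horadamT
      have : (m + (m+2)) / 2 = m + 1 := by omega
      rw [this, Nat.choose_eq_zero_of_lt (by omega)]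
      push_cast; ring
    rw [hz1, hz2] at h2
    omega
  have h0 : horadamT a b (m+2) 0 = b * horadamT a b m 0 := by
    unfold horadamT
    have e1 : (m + 2 + 0) / 2 = m / 2 + 1 := by omega
    have e2 : (m + 2 - 0) / 2 = m / 2 + 1 := by omega
    have e3 : (m + 0) / 2 = m / 2 := by omega
    have e4 : (m - 0) / 2 = m / 2 := by omega
    have e5 : m + 2 - 0 = (m - 0) + 2 := by omega
    rw [e1, e2, e3, e4, e5, Nat.choose_zero_right, Nat.choose_zero_right]
    push_cast
    ring
  rw [hb, h0]
  ring

theorem horadam_diff_binomial (a b : ℕ) (ha : 0 < a) (hb : 0 < b)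
    (s : ℕ → ℤ) (hs0 : s 0 = 1) (hs1 : s 1 = (a : ℤ))
    (hrec : ∀ n, 2 ≤ n → s n = (a : ℤ) * s (n - 1) + (b : ℤ) * s (n - 2)) :
    ∀ n, 1 ≤ n → s n - s (n - 1) =
      ∑ k ∈ Finset.range (n + 1),
        (-1 : ℤ) ^ (n - k) * ((n + k) / 2).choose k * (a : ℤ) ^ k *
          (b : ℤ) ^ ((n - k) / 2) := by
  have key : ∀ j : ℕ, s (j+1) - s j = horadamD a b (j+1) := by
    intro j
    induction j using Nat.twoStepInduction with
    | zero =>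
      rw [hs1, hs0]
      unfold horadamD horadamT
      simp [Finset.sum_range_succ]
      ring
    | one =>
      have h2 := hrec 2 (by norm_num)
      norm_num at h2
      rw [h2, hs1, hs0]
      unfold horadamD horadamT
      simp [Finset.sum_range_succ]
      ring
    | more j ih1 ih2 =>
      have h3 := hrec (j+3) (by omega)
      have h2 := hrec (j+2) (by omega)
      have e1 : j + 3 - 1 = j + 2 := by omega
      have e2 : j + 3 - 2 = j + 1 := by omega
      have e3 : j + 2 - 1 = j + 1 := by omega
      have e4 : j + 2 - 2 = j := by omega
      rw [e1, e2] at h3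
      rw [e3, e4] at h2
      have key3 : s (j+3) - s (j+2) = a * (s (j+2) - s (j+1)) + b * (s (j+1) - s j) := by
        rw [h3, h2]; ring
      have ih2' : s (j+2) - s (j+1) = horadamD a b (j+2) := ih2
      show s (j+3) - s (j+2) = horadamD a b ((j+1)+2)
      rw [horadamD_rec a b (j+1), key3, ih1, ih2']
  intro n hn
  obtain ⟨j, rfl⟩ : ∃ j, n = j + 1 := ⟨n - 1, by omega⟩
  have e : j + 1 - 1 = j := by omega
  rw [e, key j]
  rfl
end

section
/- The edge-count sequence satisfies the closed form e(n) = ∑_{k=0}^{n} (-1)^{n-k} · ⌈(n+k)/2⌉ · C(⌊(n+k)/2⌋, k) · a^k · b^{⌊(n-k)/2⌋} for all n ≥ 1. -/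
open Finset

namespace HEC

def u (a b n k : ℕ) : ℤ :=
  if (n - k) % 2 = 0 then (((n + k) / 2).choose k : ℤ) * (a:ℤ) ^ k * (b:ℤ) ^ ((n - k) / 2) else 0

def S (a b n : ℕ) : ℤ := ∑ k ∈ range (n + 1), u a b n k

def T (a b n k : ℕ) : ℤ :=
  (-1 : ℤ) ^ (n - k) * (((n:ℤ) + k + 1) / 2) * (((n + k) / 2).choose k : ℤ) *
    (a : ℤ) ^ k * (b : ℤ) ^ ((n - k) / 2)

def F (a b n : ℕ) : ℤ := ∑ k ∈ range (n + 1), T a b n k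

lemma u_eval (a b k m : ℕ) :
    u a b (k + 2 * m) k = ((k + m).choose k : ℤ) * (a:ℤ) ^ k * (b:ℤ) ^ m := by
  unfold u
  rw [show k + 2 * m - k = 2 * m by omega, show (k + 2 * m + k) / 2 = k + m by omega,
    show 2 * m % 2 = 0 by omega, show 2 * m / 2 = m by omega]
  simp

lemma u_eval_odd (a b k m : ℕ) : u a b (k + (2 * m + 1)) k = 0 := by
  unfold u
  rw [show k + (2 * m + 1) - k = 2 * m + 1 by omega, show (2 * m + 1) % 2 = 1 by omega]
  simp

lemma u_eval_lt (a b n k : ℕ) (h : n < k) : u a b n k = 0 := by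
  unfold u
  rw [Nat.choose_eq_zero_of_lt (by omega : (n + k) / 2 < k)]
  simp

lemma T_eval_even (a b k m : ℕ) :
    T a b (k + 2 * m) k = ((k + m : ℕ) : ℤ) * ((k + m).choose k : ℤ) * (a:ℤ) ^ k * (b:ℤ) ^ m := by
  unfold T
  rw [show k + 2 * m - k = 2 * m by omega, show (k + 2 * m + k) / 2 = k + m by omega,
    show ((k + 2 * m : ℕ) : ℤ) + k + 1 = 2 * ((k:ℤ) + m) + 1 by push_cast; ring,
    show (2 * ((k:ℤ) + m) + 1) / 2 = ((k + m : ℕ) : ℤ) by push_cast; omega,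
    show ((-1 : ℤ)) ^ (2 * m) = 1 by rw [pow_mul]; norm_num,
    show 2 * m / 2 = m by omega]
  ring

lemma T_eval_odd (a b k m : ℕ) :
    T a b (k + (2 * m + 1)) k =
      -(((k + m + 1 : ℕ) : ℤ) * ((k + m).choose k : ℤ) * (a:ℤ) ^ k * (b:ℤ) ^ m) := by
  unfold T
  rw [show k + (2 * m + 1) - k = 2 * m + 1 by omega,
    show (k + (2 * m + 1) + k) / 2 = k + m by omega,
    show ((k + (2 * m + 1) : ℕ) : ℤ) + k + 1 = 2 * ((k:ℤ) + m + 1) by push_cast; ring,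
    show (2 * ((k:ℤ) + m + 1)) / 2 = ((k + m + 1 : ℕ) : ℤ) by push_cast; omega,
    show ((-1 : ℤ)) ^ (2 * m + 1) = -1 by rw [pow_succ, pow_mul]; norm_num,
    show (2 * m + 1) / 2 = m by omega]
  ring

lemma T_eval_lt (a b n k : ℕ) (h : n < k) : T a b n k = 0 := by
  unfold T
  rw [Nat.choose_eq_zero_of_lt (by omega : (n + k) / 2 < k)]
  simp


lemma u_rec (a b n k : ℕ) (hn : 2 ≤ n) (hk : k ≤ n) :
    u a b n k = (a:ℤ) * (if k = 0 then 0 else u a b (n - 1) (k - 1)) + (b:ℤ) * u a b (n - 2) k := by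
  obtain ⟨d, rfl⟩ : ∃ d, n = k + d := ⟨n - k, by omega⟩
  rcases Nat.even_or_odd d with ⟨m, hm⟩ | ⟨m, hm⟩
  · -- d = 2m
    obtain rfl : d = 2 * m := by omega
    rcases Nat.eq_zero_or_pos k with rfl | hkpos
    · -- k = 0, need m ≥ 1
      obtain ⟨m', rfl⟩ : ∃ m', m = m' + 1 := ⟨m - 1, by omega⟩
      rw [if_pos rfl, show 0 + 2 * (m' + 1) - 2 = 0 + 2 * m' by omega, u_eval, u_eval]
      simp [pow_succ]; ring
    · obtain ⟨k', rfl⟩ : ∃ k', k = k' + 1 := ⟨k - 1, by omega⟩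
      rcases Nat.eq_zero_or_pos m with rfl | hmpos
      · -- m = 0, n = k ≥ 2
        have h1 := u_eval a b k' 0
        rw [show k' + 2 * 0 = k' by omega] at h1
        rw [if_neg (by omega), show k' + 1 - 1 = k' by omega, h1,
          show k' + 1 + 2 * 0 = (k' + 1) + 2 * 0 by omega, u_eval,
          u_eval_lt a b (k' + 1 + 2 * 0 - 2) (k' + 1) (by omega)]
        simp [pow_succ]; ring
      · obtain ⟨m', rfl⟩ : ∃ m', m = m' + 1 := ⟨m - 1, by omega⟩
        rw [if_neg (by omega), show k' + 1 + 2 * (m' + 1) - 1 = k' + 2 * (m' + 1) by omega,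
          show k' + 1 - 1 = k' by omega,
          show k' + 1 + 2 * (m' + 1) - 2 = k' + 1 + 2 * m' by omega, u_eval, u_eval, u_eval,
          show k' + 1 + (m' + 1) = (k' + (m' + 1)) + 1 by omega,
          Nat.choose_succ_succ (k' + (m' + 1)) k']
        push_cast
        rw [show k' + (m' + 1) = k' + 1 + m' by omega]
        ring
  · -- d = 2m + 1
    obtain rfl : d = 2 * m + 1 := by omega
    rcases Nat.eq_zero_or_pos k with rfl | hkpos
    · -- k = 0, n = 2m+1 ≥ 2 so m ≥ 1
      obtain ⟨m', rfl⟩ : ∃ m', m = m' + 1 := ⟨m - 1, by omega⟩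
      rw [if_pos rfl, u_eval_odd,
        show 0 + (2 * (m' + 1) + 1) - 2 = 0 + (2 * m' + 1) by omega, u_eval_odd]
      simp
    · obtain ⟨k', rfl⟩ : ∃ k', k = k' + 1 := ⟨k - 1, by omega⟩
      rcases Nat.eq_zero_or_pos m with rfl | hmpos
      · have h1 := u_eval_odd a b k' 0
        rw [show k' + (2 * 0 + 1) = k' + 1 by omega] at h1
        rw [if_neg (by omega), u_eval_odd, show k' + 1 - 1 = k' by omega,
          show k' + 1 + (2 * 0 + 1) - 1 = k' + 1 by omega, h1,
          u_eval_lt a b (k' + 1 + (2 * 0 + 1) - 2) (k' + 1) (by omega)]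
        simp
      · obtain ⟨m', rfl⟩ : ∃ m', m = m' + 1 := ⟨m - 1, by omega⟩
        rw [if_neg (by omega), u_eval_odd,
          show k' + 1 + (2 * (m' + 1) + 1) - 1 = k' + (2 * (m' + 1) + 1) by omega,
          show k' + 1 - 1 = k' by omega, u_eval_odd,
          show k' + 1 + (2 * (m' + 1) + 1) - 2 = k' + 1 + (2 * m' + 1) by omega, u_eval_odd]
        simp


lemma T_rec (a b n k : ℕ) (hn : 2 ≤ n) (hk : k ≤ n) :
    T a b n k = (a:ℤ) * (if k = 0 then 0 else T a b (n - 1) (k - 1)) + (b:ℤ) * T a b (n - 2) k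
      + u a b n k - u a b (n - 1) k := by
  obtain ⟨d, rfl⟩ : ∃ d, n = k + d := ⟨n - k, by omega⟩
  rcases Nat.even_or_odd d with ⟨m, hm⟩ | ⟨m, hm⟩
  · -- d = 2m
    obtain rfl : d = 2 * m := by omega
    rcases Nat.eq_zero_or_pos k with rfl | hkpos
    · -- k = 0, m ≥ 1
      obtain ⟨m', rfl⟩ : ∃ m', m = m' + 1 := ⟨m - 1, by omega⟩
      rw [if_pos rfl, show 0 + 2 * (m' + 1) - 2 = 0 + 2 * m' by omega,
        show 0 + 2 * (m' + 1) - 1 = 0 + (2 * m' + 1) by omega,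
        T_eval_even, T_eval_even, u_eval, u_eval_odd]
      simp only [Nat.choose_zero_right, Nat.choose_self, Nat.cast_one]
      push_cast
      ring
    · obtain ⟨k', rfl⟩ : ∃ k', k = k' + 1 := ⟨k - 1, by omega⟩
      rcases Nat.eq_zero_or_pos m with rfl | hmpos
      · -- m = 0, n = k ≥ 2
        have h1 := T_eval_even a b k' 0
        rw [show k' + 2 * 0 = k' by omega] at h1
        have h2 := u_eval a b (k' + 1) 0
        rw [show k' + 1 + 2 * 0 = k' + 1 by omega] at h2
        rw [if_neg (by omega), show k' + 1 - 1 = k' by omega, h1,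
          show k' + 1 + 2 * 0 = k' + 1 by omega, h2,
          u_eval_lt a b k' (k' + 1) (by omega),
          T_eval_lt a b (k' + 1 - 2) (k' + 1) (by omega)]
        have h3 := T_eval_even a b (k' + 1) 0
        rw [show k' + 1 + 2 * 0 = k' + 1 by omega] at h3
        rw [h3]
        simp only [Nat.choose_self, Nat.cast_one]
        push_cast [pow_succ]
        ring
      · obtain ⟨m', rfl⟩ : ∃ m', m = m' + 1 := ⟨m - 1, by omega⟩
        rw [if_neg (by omega), show k' + 1 - 1 = k' by omega,
          show k' + 1 + 2 * (m' + 1) - 1 = k' + 2 * (m' + 1) by omega,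
          show k' + 1 + 2 * (m' + 1) - 2 = k' + 1 + 2 * m' by omega,
          T_eval_even, T_eval_even, T_eval_even, u_eval]
        have h4 := u_eval_odd a b (k' + 1) m'
        rw [show k' + 1 + (2 * m' + 1) = k' + 2 * (m' + 1) by omega] at h4
        rw [h4, show k' + 1 + (m' + 1) = (k' + (m' + 1)) + 1 by omega,
          Nat.choose_succ_succ (k' + (m' + 1)) k']
        push_cast
        rw [show k' + (m' + 1) = k' + 1 + m' by omega]
        push_cast [pow_succ]
        ring
  · -- d = 2m + 1
    obtain rfl : d = 2 * m + 1 := by omega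
    rcases Nat.eq_zero_or_pos k with rfl | hkpos
    · -- k = 0, m ≥ 1
      obtain ⟨m', rfl⟩ : ∃ m', m = m' + 1 := ⟨m - 1, by omega⟩
      rw [if_pos rfl, show 0 + (2 * (m' + 1) + 1) - 2 = 0 + (2 * m' + 1) by omega,
        show 0 + (2 * (m' + 1) + 1) - 1 = 0 + 2 * (m' + 1) by omega,
        T_eval_odd, T_eval_odd, u_eval_odd, u_eval]
      simp only [Nat.choose_zero_right, Nat.choose_self, Nat.cast_one]
      push_cast [pow_succ]
      ring
    · obtain ⟨k', rfl⟩ : ∃ k', k = k' + 1 := ⟨k - 1, by omega⟩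
      rcases Nat.eq_zero_or_pos m with rfl | hmpos
      · -- m = 0, n = k + 1
        have h1 := T_eval_odd a b k' 0
        have h2 := u_eval a b (k' + 1) 0
        rw [show k' + 1 + 2 * 0 = k' + 1 by omega] at h2
        rw [if_neg (by omega), show k' + 1 - 1 = k' by omega, T_eval_odd,
          show k' + 1 + (2 * 0 + 1) - 1 = k' + (2 * 0 + 1) by omega, h1,
          u_eval_odd,
          show k' + (2 * 0 + 1) = k' + 1 by omega, h2,
          T_eval_lt a b (k' + 1 + (2 * 0 + 1) - 2) (k' + 1) (by omega)]
        simp only [Nat.choose_zero_right, Nat.choose_self, Nat.cast_one, Nat.add_zero]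
        push_cast [pow_succ]
        ring
      · obtain ⟨m', rfl⟩ : ∃ m', m = m' + 1 := ⟨m - 1, by omega⟩
        rw [if_neg (by omega), show k' + 1 - 1 = k' by omega,
          show k' + 1 + (2 * (m' + 1) + 1) - 1 = k' + (2 * (m' + 1) + 1) by omega,
          show k' + 1 + (2 * (m' + 1) + 1) - 2 = k' + 1 + (2 * m' + 1) by omega,
          T_eval_odd, T_eval_odd, T_eval_odd, u_eval_odd]
        have h5 := u_eval a b (k' + 1) (m' + 1)
        rw [show k' + 1 + 2 * (m' + 1) = k' + (2 * (m' + 1) + 1) by omega] at h5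
        rw [h5, show k' + 1 + (m' + 1) = (k' + (m' + 1)) + 1 by omega,
          Nat.choose_succ_succ (k' + (m' + 1)) k']
        push_cast
        rw [show k' + (m' + 1) = k' + 1 + m' by omega]
        push_cast [pow_succ]
        ring

lemma sum_u_shift (a b n : ℕ) (hn : 1 ≤ n) :
    ∑ k ∈ range (n + 1), (a:ℤ) * (if k = 0 then 0 else u a b (n - 1) (k - 1))
      = (a:ℤ) * S a b (n - 1) := by
  rw [Finset.sum_range_succ' _ n, S, show n - 1 + 1 = n by omega, Finset.mul_sum]
  simp

lemma sum_T_shift (a b n : ℕ) (hn : 1 ≤ n) :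
    ∑ k ∈ range (n + 1), (a:ℤ) * (if k = 0 then 0 else T a b (n - 1) (k - 1))
      = (a:ℤ) * F a b (n - 1) := by
  rw [Finset.sum_range_succ' _ n, F, show n - 1 + 1 = n by omega, Finset.mul_sum]
  simp

lemma sum_u_two (a b n : ℕ) (hn : 2 ≤ n) :
    ∑ k ∈ range (n + 1), u a b (n - 2) k = S a b (n - 2) := by
  rw [show n + 1 = (n - 2 + 1) + 1 + 1 by omega, Finset.sum_range_succ, Finset.sum_range_succ,
    u_eval_lt a b (n - 2) (n - 2 + 1) (by omega), u_eval_lt a b (n - 2) (n - 2 + 1 + 1) (by omega)]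
  rw [S]; ring

lemma sum_T_two (a b n : ℕ) (hn : 2 ≤ n) :
    ∑ k ∈ range (n + 1), T a b (n - 2) k = F a b (n - 2) := by
  rw [show n + 1 = (n - 2 + 1) + 1 + 1 by omega, Finset.sum_range_succ, Finset.sum_range_succ,
    T_eval_lt a b (n - 2) (n - 2 + 1) (by omega), T_eval_lt a b (n - 2) (n - 2 + 1 + 1) (by omega)]
  rw [F]; ring

lemma sum_u_one (a b n : ℕ) (hn : 1 ≤ n) :
    ∑ k ∈ range (n + 1), u a b (n - 1) k = S a b (n - 1) := by
  rw [show n + 1 = (n - 1 + 1) + 1 by omega, Finset.sum_range_succ,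
    u_eval_lt a b (n - 1) (n - 1 + 1) (by omega)]
  rw [S]; ring

lemma S_rec (a b n : ℕ) (hn : 2 ≤ n) :
    S a b n = (a:ℤ) * S a b (n - 1) + (b:ℤ) * S a b (n - 2) := by
  have h1 : S a b n = (∑ k ∈ range (n + 1), (a:ℤ) * (if k = 0 then 0 else u a b (n - 1) (k - 1)))
      + ∑ k ∈ range (n + 1), (b:ℤ) * u a b (n - 2) k := by
    rw [S, ← Finset.sum_add_distrib]
    exact Finset.sum_congr rfl fun k hk =>
      u_rec a b n k hn (by have := Finset.mem_range.mp hk; omega)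
  rw [h1, sum_u_shift a b n (by omega), ← Finset.mul_sum, sum_u_two a b n hn]

lemma F_rec (a b n : ℕ) (hn : 2 ≤ n) :
    F a b n = (a:ℤ) * F a b (n - 1) + (b:ℤ) * F a b (n - 2) + S a b n - S a b (n - 1) := by
  have h1 : F a b n = (∑ k ∈ range (n + 1), (a:ℤ) * (if k = 0 then 0 else T a b (n - 1) (k - 1)))
      + ((∑ k ∈ range (n + 1), (b:ℤ) * T a b (n - 2) k)
        + ((∑ k ∈ range (n + 1), u a b n k) - ∑ k ∈ range (n + 1), u a b (n - 1) k)) := by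
    rw [F, ← Finset.sum_sub_distrib, ← Finset.sum_add_distrib, ← Finset.sum_add_distrib]
    refine Finset.sum_congr rfl fun k hk => ?_
    have hk' : k ≤ n := by have := Finset.mem_range.mp hk; omega
    have := T_rec a b n k hn hk'
    linarith
  rw [h1, sum_T_shift a b n (by omega), ← Finset.mul_sum, sum_T_two a b n hn,
    sum_u_one a b n (by omega)]
  simp only [S]
  ring

lemma S_zero (a b : ℕ) : S a b 0 = 1 := by
  simp [S, u]

lemma S_one (a b : ℕ) : S a b 1 = (a : ℤ) := by
  simp [S, u, Finset.sum_range_succ]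

lemma F_zero (a b : ℕ) : F a b 0 = 0 := by
  simp [F, T]

lemma F_one (a b : ℕ) : F a b 1 = (a : ℤ) - 1 := by
  norm_num [F, T, Finset.sum_range_succ]
  ring

end HEC


theorem horadam_edge_count_binomial (a b : ℕ) (ha : 0 < a) (hb : 0 < b)
    (s e : ℕ → ℤ) (hs0 : s 0 = 1) (hs1 : s 1 = (a : ℤ))
    (hsrec : ∀ n, 2 ≤ n → s n = (a : ℤ) * s (n - 1) + (b : ℤ) * s (n - 2))
    (he0 : e 0 = 0) (he1 : e 1 = (a : ℤ) - 1)
    (herec : ∀ n, 2 ≤ n →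
      e n = (a : ℤ) * e (n - 1) + (b : ℤ) * e (n - 2) + s n - s (n - 1)) :
    ∀ n, 1 ≤ n → e n =
      ∑ k ∈ Finset.range (n + 1),
        (-1 : ℤ) ^ (n - k) * ((n + k + 1) / 2) * ((n + k) / 2).choose k *
          (a : ℤ) ^ k * (b : ℤ) ^ ((n - k) / 2) := by
  have s_eq : ∀ n, s n = HEC.S a b n := by
    intro n
    induction n using Nat.strong_induction_on with
    | _ n ih =>
      match n, ih with
      | 0, _ => rw [hs0, HEC.S_zero]
      | 1, _ => rw [hs1, HEC.S_one]
      | (m + 2), ih =>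
        rw [hsrec (m + 2) (by omega), show m + 2 - 1 = m + 1 by omega,
          show m + 2 - 2 = m by omega, ih (m + 1) (by omega), ih m (by omega),
          HEC.S_rec a b (m + 2) (by omega), show m + 2 - 1 = m + 1 by omega,
          show m + 2 - 2 = m by omega]
  have e_eq : ∀ n, e n = HEC.F a b n := by
    intro n
    induction n using Nat.strong_induction_on with
    | _ n ih =>
      match n, ih with
      | 0, _ => rw [he0, HEC.F_zero]
      | 1, _ => rw [he1, HEC.F_one]
      | (m + 2), ih =>
        rw [herec (m + 2) (by omega), show m + 2 - 1 = m + 1 by omega,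
          show m + 2 - 2 = m by omega, ih (m + 1) (by omega), ih m (by omega),
          s_eq, s_eq, HEC.F_rec a b (m + 2) (by omega), show m + 2 - 1 = m + 1 by omega,
          show m + 2 - 2 = m by omega]
  intro n _
  rw [e_eq n]
  rfl
end

section
/- When a = 2, the edge count of the Horadam cube satisfies e(n) = n·s(n)/2 for all n ≥ 0, i.e., 2·e(n) = n·s(n). -/
theorem horadam_edge_count_a_eq_two (b : ℕ) (hb : 0 < b)
    (s e : ℕ → ℤ) (hs0 : s 0 = 1) (hs1 : s 1 = 2)
    (hsrec : ∀ n, 2 ≤ n → s n = 2 * s (n - 1) + (b : ℤ) * s (n - 2))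
    (he0 : e 0 = 0) (he1 : e 1 = 1)
    (herec : ∀ n, 2 ≤ n →
      e n = 2 * e (n - 1) + (b : ℤ) * e (n - 2) + s n - s (n - 1)) :
    ∀ n, 2 * e n = (n : ℤ) * s n := by
  intro n
  induction n using Nat.strong_induction_on with
  | _ n ih =>
    match n with
    | 0 => simp [he0]
    | 1 => simp [he1, hs1]
    | (m + 2) =>
      have hE := herec (m + 2) (by omega)
      have hS := hsrec (m + 2) (by omega)
      simp only [Nat.add_sub_cancel, show m + 2 - 1 = m + 1 from rfl] at hE hS
      have ih1 := ih (m + 1) (by omega)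
      have ih0 := ih m (by omega)
      push_cast
      push_cast at ih1 ih0
      linear_combination 2 * hE + 2 * ih1 + (b : ℤ) * ih0 - (m : ℤ) * hS
end

section
/- The map ρ from Horadam strings of length n to binary strings is surjective onto the set of Fibonacci strings of length n that begin with 0; consequently the number of distinct images equals F_{n+1}, the number of such Fibonacci strings. -/
/-- No two consecutive ones. -/
def NoConsecOnes (l : List ℕ) : Prop :=
  l.Chain' (fun u v => ¬(u = 1 ∧ v = 1))

/-- Finset of Fibonacci strings of length `m`. -/
def G : ℕ → Finset (List ℕ)
  | 0 => {[]}
  | 1 => {[0], [1]}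
  | (m+2) => ((G (m+1)).image (List.cons 0)) ∪ ((G m).image (fun t => 1 :: 0 :: t))

lemma mem_G : ∀ m (w : List ℕ), w ∈ G m ↔
    (w.length = m ∧ (∀ c ∈ w, c ≤ 1) ∧ NoConsecOnes w) := by
  intro m
  induction m using Nat.strong_induction_on with
  | _ m ih =>
    match m with
    | 0 =>
      intro w
      simp [G, NoConsecOnes, List.length_eq_zero_iff]
      rintro rfl; simp [List.Chain']
    | 1 =>
      intro w
      constructor
      · intro hw
        simp [G] at hw
        rcases hw with rfl | rfl <;> simp [NoConsecOnes, List.Chain']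
      · rintro ⟨hl, hle, _⟩
        match w, hl with
        | [c], _ =>
          have : c ≤ 1 := hle c (by simp)
          interval_cases c <;> simp [G]
    | (k+2) =>
      intro w
      constructor
      · intro hw
        simp only [G, Finset.mem_union, Finset.mem_image] at hw
        rcases hw with ⟨t, ht, rfl⟩ | ⟨t, ht, rfl⟩
        · obtain ⟨hl, hle, hc⟩ := (ih (k+1) (by omega) t).1 ht
          refine ⟨by simp [hl], ?_, ?_⟩
          · intro c hc
            rcases List.mem_cons.1 hc with rfl | h
            · omega
            · exact hle c h
          · exact List.isChain_cons.2 ⟨fun y _ => by simp, hc⟩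
        · obtain ⟨hl, hle, hc⟩ := (ih k (by omega) t).1 ht
          refine ⟨by simp [hl], ?_, ?_⟩
          · intro c hmem
            rcases List.mem_cons.1 hmem with rfl | hmem
            · exact le_refl 1
            rcases List.mem_cons.1 hmem with rfl | hmem
            · omega
            · exact hle c hmem
          · refine List.isChain_cons_cons.2 ⟨by simp, ?_⟩
            exact List.isChain_cons.2 ⟨fun y _ => by simp, hc⟩
      · rintro ⟨hl, hle, hc⟩
        match w with
        | c :: t =>
          have hc1 : c ≤ 1 := hle c (by simp)
          simp only [G, Finset.mem_union, Finset.mem_image]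
          interval_cases c
          · left
            refine ⟨t, ?_, rfl⟩
            refine (ih (k+1) (by omega) t).2 ⟨by simpa using hl,
              fun x hx => hle x (by simp [hx]), hc.tail⟩
          · -- c = 1, so t = d :: t' with d = 0
            have htne : t ≠ [] := by
              intro h; subst h; simp at hl
            obtain ⟨d, t', rfl⟩ := List.exists_cons_of_ne_nil htne
            have hd1 : d ≤ 1 := hle d (by simp)
            have hd0 : d = 0 := by
              have := (List.isChain_cons_cons.1 hc).1
              omega
            subst hd0
            right
            refine ⟨t', ?_, rfl⟩
            refine (ih k (by omega) t').2 ⟨by simp at hl; omega,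
              fun x hx => hle x (by simp [hx]), ?_⟩
            exact ((List.isChain_cons_cons.1 hc).2).tail

lemma card_G : ∀ m, (G m).card = Nat.fib (m + 2) := by
  intro m
  induction m using Nat.strong_induction_on with
  | _ m ih =>
    match m with
    | 0 => simp [G]
    | 1 => simp [G]; decide
    | (k+2) =>
      have hdisj : Disjoint ((G (k+1)).image (List.cons 0))
          ((G k).image (fun t => 1 :: 0 :: t)) := by
        rw [Finset.disjoint_left]
        rintro x hx hy
        simp only [Finset.mem_image] at hx hy
        obtain ⟨t, _, rfl⟩ := hx
        obtain ⟨s, _, h⟩ := hy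
        simp at h
      rw [show G (k+2) = ((G (k+1)).image (List.cons 0)) ∪
            ((G k).image (fun t => 1 :: 0 :: t)) from rfl,
          Finset.card_union_of_disjoint hdisj,
          Finset.card_image_of_injective _ (fun x y h => by simpa using h),
          Finset.card_image_of_injective _ (fun x y h => by simpa using h),
          ih (k+1) (by omega), ih k (by omega)]
      show Nat.fib (k+3) + Nat.fib (k+2) = Nat.fib (k+4)
      have hfib : Nat.fib (k + 4) = Nat.fib (k + 2) + Nat.fib (k + 3) := Nat.fib_add_two
      omega

theorem rho_surjective_onto_fibonacci_strings (a b n : ℕ)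
    (ha : 0 < a) (hb : 0 < b) (hn : 1 ≤ n) :
    (∀ w : List ℕ, w.length = n → (∀ c ∈ w, c ≤ 1) → NoConsecOnes w →
        w.headD 0 = 0 →
      ∃ l : List ℕ, l.length = n ∧ IsHoradam a b l ∧
        l.map (fun c => if c < a then 0 else 1) = w) ∧
    Nat.card {w : List ℕ // ∃ l : List ℕ, l.length = n ∧ IsHoradam a b l ∧
        l.map (fun c => if c < a then 0 else 1) = w} = Nat.fib (n + 1) := by
  have part1 : ∀ w : List ℕ, w.length = n → (∀ c ∈ w, c ≤ 1) → NoConsecOnes w →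
      w.headD 0 = 0 →
      ∃ l : List ℕ, l.length = n ∧ IsHoradam a b l ∧
        l.map (fun c => if c < a then 0 else 1) = w := by
    intro w hlen hle hchain hhead
    refine ⟨w.map (fun c => if c = 0 then 0 else a), by simp [hlen], ⟨?_, ?_⟩, ?_⟩
    · intro c hc
      simp only [List.mem_map] at hc
      obtain ⟨x, _, rfl⟩ := hc
      split <;> omega
    · intro i hi hai
      simp only [List.length_map] at hi
      rw [List.getD_eq_getElem _ _ (by simpa using hi), List.getElem_map] at hai
      have hwi : w[i] = 1 := by
        have := hle w[i] (List.getElem_mem _)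
        split at hai <;> omega
      have hne : w ≠ [] := by
        intro h; rw [h] at hlen; simp at hlen; omega
      obtain ⟨h0, t, rfl⟩ := List.exists_cons_of_ne_nil hne
      have hh0 : h0 = 0 := hhead
      have hipos : 0 < i := by
        rcases Nat.eq_zero_or_pos i with h | h
        · subst h; simp [hh0] at hwi
        · exact h
      refine ⟨hipos, ?_⟩
      have hpred : (h0 :: t)[i-1]'(by omega) = 0 := by
        have hch := List.isChain_iff_getElem.1 hchain (i-1) (by omega)
        simp only [show i - 1 + 1 = i by omega] at hch
        have h1 : (h0 :: t)[i-1]'(by omega) ≤ 1 :=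
          hle _ (List.getElem_mem _)
        by_contra hne0
        exact hch ⟨by omega, hwi⟩
      have hlt : i < t.length + 1 := by simpa using hi
      rw [List.getD_eq_getElem _ _ (by simp; omega), List.getElem_map, hpred]
      simp
    · rw [List.map_map]
      have : ∀ c ∈ w, ((fun c => if c < a then 0 else 1) ∘
          (fun c => if c = 0 then 0 else a)) c = id c := by
        intro c hc
        have := hle c hc
        interval_cases c <;> simp [ha, Nat.not_lt.2 (le_refl a)]
      rw [List.map_congr_left this, List.map_id]
  refine ⟨part1, ?_⟩
  have hkey : ∀ w : List ℕ,
      (∃ l : List ℕ, l.length = n ∧ IsHoradam a b l ∧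
        l.map (fun c => if c < a then 0 else 1) = w) ↔
      w ∈ (G (n-1)).image (List.cons 0) := by
    intro w
    constructor
    · rintro ⟨l, hlen, ⟨hbound, hhor⟩, rfl⟩
      set ρ : ℕ → ℕ := fun c => if c < a then 0 else 1 with hρ
      have hlne : l ≠ [] := by
        intro h; rw [h] at hlen; simp at hlen; omega
      obtain ⟨c0, t, rfl⟩ := List.exists_cons_of_ne_nil hlne
      have hc0 : c0 < a := by
        by_contra h
        have := hhor 0 (by simp) (by simpa using Nat.le_of_not_lt h)
        omega
      -- entries of image ≤ 1 and no consecutive ones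
      have hle' : ∀ c ∈ (c0 :: t).map ρ, c ≤ 1 := by
        intro c hc
        simp only [List.mem_map] at hc
        obtain ⟨x, _, rfl⟩ := hc
        simp only [hρ]; split <;> omega
      have hnco : NoConsecOnes ((c0 :: t).map ρ) := by
        rw [NoConsecOnes, List.Chain', List.isChain_iff_getElem]
        intro j hj
        simp only [List.length_map, List.length_cons] at hj
        simp only [List.get_eq_getElem, List.getElem_map]
        rintro ⟨h1, h2⟩
        have ha2 : a ≤ (c0 :: t)[j+1]'(by simp; omega) := by
          simp only [hρ] at h2; split at h2 <;> omega
        have := hhor (j+1) (by simp; omega)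
          (by rwa [List.getD_eq_getElem _ _ (by simp; omega)])
        have hprev : (c0 :: t)[j]'(by simp; omega) = 0 := by
          have h3 := this.2
          rwa [show j + 1 - 1 = j from rfl,
            List.getD_eq_getElem _ _ (by simp; omega)] at h3
        rw [hprev] at h1
        simp only [hρ, if_pos ha] at h1
        exact absurd h1 (by omega)
      simp only [Finset.mem_image]
      refine ⟨t.map ρ, ?_, by simp [hρ, hc0]⟩
      refine (mem_G (n-1) (t.map ρ)).2 ⟨by simp at hlen ⊢; omega,
        fun c hc => hle' c (by simp at hc ⊢; tauto), ?_⟩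
      have := hnco
      rw [NoConsecOnes] at this ⊢
      simpa [List.Chain'] using this.tail
    · intro hw
      simp only [Finset.mem_image] at hw
      obtain ⟨t, ht, rfl⟩ := hw
      obtain ⟨hl, hle, hc⟩ := (mem_G (n-1) t).1 ht
      exact part1 (0 :: t) (by simp [hl]; omega)
        (by intro c hc'; simp at hc'; rcases hc' with rfl | h; omega; exact hle c h)
        (List.isChain_cons.2 ⟨fun y _ => by simp, hc⟩) rfl
  rw [Nat.card_congr (Equiv.subtypeEquivRight hkey), Nat.card_eq_finsetCard,
    Finset.card_image_of_injective _ (fun x y h => by simpa using h),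
    card_G (n-1), show n - 1 + 2 = n + 1 by omega]
end

section
/- For a Fibonacci string w of length n starting with 0 and containing exactly k ones, the number of Horadam strings mapping to w under ρ equals a^{n-2k}·b^k. -/
def rho (a c : ℕ) : ℕ := if c < a then 0 else 1

lemma horadam_cons0 (a b : ℕ) (ha : 0 < a) (c : ℕ) (l : List ℕ) (hl : l.getD 0 0 < a) :
    IsHoradam a b (c :: l) ↔ c < a ∧ IsHoradam a b l := by
  constructor
  · rintro ⟨hmem, hidx⟩
    have hc : c < a := by
      by_contra h
      have := hidx 0 (by simp) (by simpa using Nat.le_of_not_lt h)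
      exact absurd this.1 (lt_irrefl 0)
    refine ⟨hc, fun x hx => hmem x (List.mem_cons_of_mem _ hx), ?_⟩
    intro i hi hai
    match i with
    | 0 => exact absurd hai (Nat.not_le.mpr hl)
    | (j+1) =>
      obtain ⟨-, h2⟩ := hidx (j+2) (by simp; omega) (by simpa using hai)
      exact ⟨Nat.succ_pos j, by simpa using h2⟩
  · rintro ⟨hc, hmem, hidx⟩
    refine ⟨?_, ?_⟩
    · intro x hx
      rcases List.mem_cons.mp hx with rfl | hx
      · exact lt_of_lt_of_le hc (Nat.le_add_right a b)
      · exact hmem x hx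
    · intro i hi hai
      match i with
      | 0 => exact absurd hai (Nat.not_le.mpr (by simpa using hc))
      | 1 => exact absurd hai (Nat.not_le.mpr (by simpa using hl))
      | (j+2) =>
        obtain ⟨h1, h2⟩ := hidx (j+1) (by simp_all; omega) (by simpa using hai)
        refine ⟨Nat.succ_pos _, ?_⟩
        have : (j+2) - 1 = j + 1 := rfl
        rw [this, List.getD_cons_succ]
        simpa using h2

lemma horadam_cons01 (a b : ℕ) (ha : 0 < a) (c : ℕ) (l : List ℕ) (hl : l.getD 0 0 < a) :
    IsHoradam a b (0 :: c :: l) ↔ c < a + b ∧ IsHoradam a b l := by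
  constructor
  · rintro ⟨hmem, hidx⟩
    refine ⟨hmem c (by simp), fun x hx => hmem x (by simp [hx]), ?_⟩
    intro i hi hai
    match i with
    | 0 => exact absurd hai (Nat.not_le.mpr hl)
    | (j+1) =>
      obtain ⟨-, h2⟩ := hidx (j+3) (by simp; omega)
        (by simpa using hai)
      exact ⟨Nat.succ_pos j, by simpa using h2⟩
  · rintro ⟨hc, hmem, hidx⟩
    refine ⟨?_, ?_⟩
    · intro x hx
      rcases List.mem_cons.mp hx with rfl | hx
      · exact Nat.lt_of_lt_of_le ha (Nat.le_add_right a b)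
      · rcases List.mem_cons.mp hx with rfl | hx
        · exact hc
        · exact hmem x hx
    · intro i hi hai
      match i with
      | 0 => exact absurd hai (Nat.not_le.mpr (by simpa using ha))
      | 1 => exact ⟨Nat.one_pos, by simp⟩
      | 2 => exact absurd hai (Nat.not_le.mpr (by simpa using hl))
      | (j+3) =>
        obtain ⟨h1, h2⟩ := hidx (j+1) (by simp_all; omega) (by simpa using hai)
        refine ⟨Nat.succ_pos _, ?_⟩
        have : (j+3) - 1 = j + 2 := rfl
        rw [this, List.getD_cons_succ, List.getD_cons_succ]
        simpa using h2

lemma rho_eq_zero (a c : ℕ) : rho a c = 0 ↔ c < a := by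
  unfold rho; split <;> simp_all

lemma rho_eq_one (a c : ℕ) : rho a c = 1 ↔ a ≤ c := by
  unfold rho; split <;> simp_all

-- head of fiber element is < a when w starts with 0 (or is empty)
lemma head_lt (a : ℕ) (ha : 0 < a) (l w : List ℕ) (hmap : l.map (rho a) = w)
    (hw : w.headD 0 = 0) : l.getD 0 0 < a := by
  match l with
  | [] => simpa using ha
  | c :: l' =>
    subst hmap
    simp only [List.map_cons, List.headD_cons] at hw
    rw [List.getD_cons_zero]
    exact (rho_eq_zero a c).mp hw

lemma card_nil (a b : ℕ) :
    Nat.card {l : List ℕ // IsHoradam a b l ∧ l.map (rho a) = []} = 1 := by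
  haveI : Unique {l : List ℕ // IsHoradam a b l ∧ l.map (rho a) = []} := by
    refine ⟨⟨⟨[], horadam_nil a b, rfl⟩⟩, ?_⟩
    rintro ⟨l, h1, h2⟩
    have : l = [] := by simpa using h2
    subst this; rfl
  exact Nat.card_unique

lemma card_cons0 (a b : ℕ) (ha : 0 < a) (w : List ℕ) (hw : w.headD 0 = 0) :
    Nat.card {l : List ℕ // IsHoradam a b l ∧ l.map (rho a) = 0 :: w} =
      a * Nat.card {l : List ℕ // IsHoradam a b l ∧ l.map (rho a) = w} := by
  have key : Nat.card {l : List ℕ // IsHoradam a b l ∧ l.map (rho a) = 0 :: w} =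
      Nat.card (Fin a × {l : List ℕ // IsHoradam a b l ∧ l.map (rho a) = w}) := by
    refine (Nat.card_congr (Equiv.ofBijective
      (fun p => ⟨(p.1 : ℕ) :: p.2.1,
        (horadam_cons0 a b ha _ _ (head_lt a ha _ _ p.2.2.2 hw)).mpr ⟨p.1.2, p.2.2.1⟩,
        by simp only [List.map_cons, p.2.2.2, List.cons.injEq, and_true]
           exact (rho_eq_zero a p.1).mpr p.1.2⟩) ⟨?_, ?_⟩)).symm
    · rintro ⟨⟨c, hc⟩, ⟨l, hl⟩⟩ ⟨⟨c', hc'⟩, ⟨l', hl'⟩⟩ h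
      simp only [Subtype.mk.injEq, List.cons.injEq] at h
      simp [Prod.ext_iff, Subtype.ext_iff, h.1, h.2]
    · rintro ⟨l, hhor, hmap⟩
      match l with
      | [] => simp at hmap
      | c :: l' =>
        simp only [List.map_cons, List.cons.injEq] at hmap
        have hc : c < a := (rho_eq_zero a c).mp hmap.1
        have := (horadam_cons0 a b ha c l' (head_lt a ha _ _ hmap.2 hw)).mp hhor
        exact ⟨⟨⟨c, hc⟩, ⟨l', this.2, hmap.2⟩⟩, rfl⟩
  rw [key, Nat.card_prod, Nat.card_eq_fintype_card, Fintype.card_fin]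

lemma card_cons01 (a b : ℕ) (ha : 0 < a) (w : List ℕ) (hw : w.headD 0 = 0) :
    Nat.card {l : List ℕ // IsHoradam a b l ∧ l.map (rho a) = 0 :: 1 :: w} =
      b * Nat.card {l : List ℕ // IsHoradam a b l ∧ l.map (rho a) = w} := by
  have key : Nat.card {l : List ℕ // IsHoradam a b l ∧ l.map (rho a) = 0 :: 1 :: w} =
      Nat.card (Fin b × {l : List ℕ // IsHoradam a b l ∧ l.map (rho a) = w}) := by
    refine (Nat.card_congr (Equiv.ofBijective
      (fun p => ⟨0 :: (a + (p.1 : ℕ)) :: p.2.1,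
        (horadam_cons01 a b ha _ _ (head_lt a ha _ _ p.2.2.2 hw)).mpr
          ⟨by have := p.1.2; omega, p.2.2.1⟩,
        by simp only [List.map_cons, p.2.2.2, List.cons.injEq, and_true]
           exact ⟨(rho_eq_zero a 0).mpr ha, (rho_eq_one a _).mpr (Nat.le_add_right a _)⟩⟩)
      ⟨?_, ?_⟩)).symm
    · rintro ⟨⟨c, hc⟩, ⟨l, hl⟩⟩ ⟨⟨c', hc'⟩, ⟨l', hl'⟩⟩ h
      simp only [Subtype.mk.injEq, List.cons.injEq, true_and] at h
      have : c = c' := by omega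
      simp [Prod.ext_iff, Subtype.ext_iff, this, h.2]
    · rintro ⟨l, hhor, hmap⟩
      match l with
      | [] => simp at hmap
      | [c] => simp at hmap
      | c :: d :: l' =>
        simp only [List.map_cons, List.cons.injEq] at hmap
        have hc : c < a := (rho_eq_zero a c).mp hmap.1
        have hd : a ≤ d := (rho_eq_one a d).mp hmap.2.1
        have hc0 : c = 0 := by
          have := hhor.2 1 (by simp) (by simpa using hd)
          simpa using this.2
        subst hc0
        have := (horadam_cons01 a b ha d l' (head_lt a ha _ _ hmap.2.2 hw)).mp hhor
        refine ⟨⟨⟨d - a, by omega⟩, ⟨l', this.2, hmap.2.2⟩⟩, ?_⟩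
        simp only [Subtype.mk.injEq, List.cons.injEq, true_and, and_true]
        omega
  rw [key, Nat.card_prod, Nat.card_eq_fintype_card, Fintype.card_fin]

lemma count_le (w : List ℕ) (hbin : ∀ c ∈ w, c ≤ 1) (hfib : NoConsecOnes w)
    (h0 : w.headD 0 = 0) : 2 * w.count 1 ≤ w.length := by
  suffices H : ∀ N (w : List ℕ), w.length ≤ N → (∀ c ∈ w, c ≤ 1) → NoConsecOnes w →
      w.headD 0 = 0 → 2 * w.count 1 ≤ w.length from H w.length w le_rfl hbin hfib h0
  intro N
  induction N with
  | zero =>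
    intro w hw _ _ _
    have : w = [] := List.length_eq_zero_iff.mp (Nat.le_zero.mp hw)
    subst this; simp
  | succ N ih =>
    intro w hw hbin hfib h0
    match w with
    | [] => simp
    | c :: w' =>
      have hc : c = 0 := by simpa using h0
      subst hc
      match w' with
      | [] => simp
      | 0 :: w'' =>
        have := ih (0 :: w'') (by simpa using hw) (fun x hx => hbin x (by simp [hx]))
          (hfib.tail) (by simp)
        simp [List.count_cons] at this ⊢
        omega
      | 1 :: w'' =>
        have hh : w''.headD 0 = 0 := by
          match w'' with
          | [] => rfl
          | d :: t =>
            have h1 := (List.isChain_cons_cons.mp (hfib.tail)).1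
            have : d ≤ 1 := hbin d (by simp)
            simp only [List.headD_cons]
            omega
        have := ih w'' (by simp at hw; omega) (fun x hx => hbin x (by simp [hx]))
          (hfib.tail.tail) hh
        simp [List.count_cons] at this ⊢
        omega
      | (n+2) :: w'' =>
        have := hbin (n+2) (by simp)
        omega

lemma main_card (a b : ℕ) (ha : 0 < a) (hb : 0 < b) (w : List ℕ)
    (hbin : ∀ c ∈ w, c ≤ 1) (hfib : NoConsecOnes w) (h0 : w.headD 0 = 0) :
    Nat.card {l : List ℕ // IsHoradam a b l ∧ l.map (rho a) = w} =
      a ^ (w.length - 2 * w.count 1) * b ^ w.count 1 := by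
  suffices H : ∀ N (w : List ℕ), w.length ≤ N → (∀ c ∈ w, c ≤ 1) → NoConsecOnes w →
      w.headD 0 = 0 →
      Nat.card {l : List ℕ // IsHoradam a b l ∧ l.map (rho a) = w} =
        a ^ (w.length - 2 * w.count 1) * b ^ w.count 1 from
    H w.length w le_rfl hbin hfib h0
  intro N
  induction N with
  | zero =>
    intro w hw _ _ _
    have : w = [] := List.length_eq_zero_iff.mp (Nat.le_zero.mp hw)
    subst this; simpa using card_nil a b
  | succ N ih =>
    intro w hw hbin hfib h0
    match w with
    | [] => simpa using card_nil a b
    | c :: w' =>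
      have hc : c = 0 := by simpa using h0
      subst hc
      match w' with
      | [] =>
        rw [card_cons0 a b ha [] rfl, card_nil a b]
        simp
      | 0 :: w'' =>
        have hrec := ih (0 :: w'') (by simpa using hw) (fun x hx => hbin x (by simp [hx]))
          (hfib.tail) (by simp)
        rw [card_cons0 a b ha (0 :: w'') (by simp), hrec]
        have hle := count_le (0 :: w'') (fun x hx => hbin x (by simp [hx])) (hfib.tail)
          (by simp)
        have hcnt : (0 :: 0 :: w'').count 1 = (0 :: w'').count 1 := by simp
        have hexp : (0 :: 0 :: w'').length - 2 * (0 :: 0 :: w'').count 1 =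
            ((0 :: w'').length - 2 * (0 :: w'').count 1) + 1 := by
          simp only [List.length_cons] at hle ⊢
          omega
        rw [hexp, hcnt, pow_succ]
        ring
      | 1 :: w'' =>
        have hh : w''.headD 0 = 0 := by
          match w'' with
          | [] => rfl
          | d :: t =>
            have h1 := (List.isChain_cons_cons.mp (hfib.tail)).1
            have : d ≤ 1 := hbin d (by simp)
            simp only [List.headD_cons]
            omega
        have hrec := ih w'' (by simp at hw; omega) (fun x hx => hbin x (by simp [hx]))
          (hfib.tail.tail) hh
        rw [card_cons01 a b ha w'' hh, hrec]
        have hcnt : (0 :: 1 :: w'').count 1 = w''.count 1 + 1 := by simp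
        have hexp : (0 :: 1 :: w'').length - 2 * (0 :: 1 :: w'').count 1 =
            w''.length - 2 * w''.count 1 := by
          rw [hcnt]; simp only [List.length_cons]; omega
        rw [hexp, hcnt, pow_succ]
        ring
      | (n+2) :: w'' =>
        have := hbin (n+2) (by simp)
        omega

theorem rho_fiber_card (a b n k : ℕ) (ha : 0 < a) (hb : 0 < b)
    (w : List ℕ) (hwl : w.length = n) (hwbin : ∀ c ∈ w, c ≤ 1)
    (hwfib : NoConsecOnes w) (hw0 : w.headD 0 = 0) (hk : w.count 1 = k) :
    Nat.card {l : List ℕ // l.length = n ∧ IsHoradam a b l ∧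
        l.map (fun c => if c < a then 0 else 1) = w} =
      a ^ (n - 2 * k) * b ^ k := by
  subst hwl hk
  have e : {l : List ℕ // l.length = w.length ∧ IsHoradam a b l ∧ l.map (rho a) = w} ≃
      {l : List ℕ // IsHoradam a b l ∧ l.map (rho a) = w} :=
    Equiv.subtypeEquivRight (fun l =>
      ⟨fun h => h.2, fun h => ⟨by rw [← h.2, List.length_map], h⟩⟩)
  exact (Nat.card_congr e).trans (main_card a b ha hb w hwbin hwfib hw0)
end

section
/- The cube coefficient generating sequence satisfies: c_k(n) = a·c_k(n-1) + b·c_k(n-2) + (a-1)·c_{k-1}(n-1) + b·c_{k-1}(n-2) for n ≥ 2, k ≥ 1, with c_0(n) = s(n), implies that the cube number c(n) = ∑_k c_k(n) satisfies c(n) = (2a-1)·c(n-1) + 2b·c(n-2) with c(0)=1 and c(1)=2a-1. -/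
theorem cube_number_recurrence (a b : ℕ) (ha : 0 < a) (hb : 0 < b)
    (c : ℕ → ℕ → ℕ)
    (h0 : ∀ k, c 0 k = if k = 0 then 1 else 0)
    (h10 : c 1 0 = a) (h11 : c 1 1 = a - 1)
    (h1k : ∀ k, 2 ≤ k → c 1 k = 0)
    (hrec0 : ∀ n, 2 ≤ n → c n 0 = a * c (n - 1) 0 + b * c (n - 2) 0)
    (hrec : ∀ n k, 2 ≤ n → 1 ≤ k →
      c n k = a * c (n - 1) k + b * c (n - 2) k +
        (a - 1) * c (n - 1) (k - 1) + b * c (n - 2) (k - 1))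
    (hvanish : ∀ n k, n < k → c n k = 0)
    (C : ℕ → ℕ)
    (hC : ∀ n, C n = ∑ k ∈ Finset.range (n + 1), c n k) :
    C 0 = 1 ∧ C 1 = 2 * a - 1 ∧
    ∀ n, 2 ≤ n → C n = (2 * a - 1) * C (n - 1) + 2 * b * C (n - 2) := by
  refine ⟨by rw [hC]; simp [h0], ?_, ?_⟩
  · rw [hC]
    rw [Finset.sum_range_succ, Finset.sum_range_succ, Finset.sum_range_zero,
      h10, h11]
    omega
  intro n hn
  obtain ⟨m, rfl⟩ : ∃ m, n = m + 2 := ⟨n - 2, by omega⟩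
  have hm1 : m + 2 - 1 = m + 1 := rfl
  have hm2 : m + 2 - 2 = m := rfl
  rw [hm1, hm2]
  have key : C (m + 2) =
      a * (∑ i ∈ Finset.range (m + 2), c (m + 1) (i + 1)) +
      b * (∑ i ∈ Finset.range (m + 2), c m (i + 1)) +
      (a - 1) * (∑ i ∈ Finset.range (m + 2), c (m + 1) i) +
      b * (∑ i ∈ Finset.range (m + 2), c m i) +
      (a * c (m + 1) 0 + b * c m 0) := by
    rw [hC, Finset.sum_range_succ']
    rw [hrec0 (m + 2) (by omega), hm1, hm2]
    congr 1
    rw [Finset.sum_congr rfl (fun i _ => hrec (m + 2) (i + 1) (by omega) (by omega))]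
    simp only [hm1, hm2, Nat.add_sub_cancel]
    rw [Finset.sum_add_distrib, Finset.sum_add_distrib, Finset.sum_add_distrib,
      ← Finset.mul_sum, ← Finset.mul_sum, ← Finset.mul_sum, ← Finset.mul_sum]
  have e1 : (∑ i ∈ Finset.range (m + 2), c (m + 1) (i + 1)) + c (m + 1) 0
      = C (m + 1) := by
    rw [hC, ← Finset.sum_range_succ']
    rw [Finset.sum_range_succ, hvanish (m + 1) (m + 2) (by omega), add_zero]
  have e2 : (∑ i ∈ Finset.range (m + 2), c m (i + 1)) + c m 0 = C m := by
    rw [hC, ← Finset.sum_range_succ']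
    rw [Finset.sum_range_succ, Finset.sum_range_succ,
      hvanish m (m + 2) (by omega), hvanish m (m + 1) (by omega), add_zero, add_zero]
  have e3 : (∑ i ∈ Finset.range (m + 2), c (m + 1) i) = C (m + 1) := by
    rw [hC]
  have e4 : (∑ i ∈ Finset.range (m + 2), c m i) = C m := by
    rw [hC, Finset.sum_range_succ, hvanish m (m + 1) (by omega), add_zero]
  rw [key, e3, e4, show 2 * a - 1 = a + (a - 1) from by omega, add_mul, two_mul,
    add_mul, ← e1, ← e2]
  ring
end
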